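/- Let M be a matroid with a 2-separation (X,Y), and let N be a 3-connected minor of M. Then |X ∩ E(N)| ≤ 1 or |Y ∩ E(N)| ≤ 1. -/

import Mathlib

open Set Matroid

namespace PaperFormal

variable {α : Type*} {β : Type*}

/-- The (ℤ-valued) rank of a set in a matroid: the supremum of cardinalities of
independent subsets. -/
noncomputable def rk (M : Matroid α) (X : Set α) : ℤ :=
  (sSup {n : ℕ | ∃ I, I ⊆ X ∧ M.Indep I ∧ I.ncard = n} : ℕ)

/-- Local connectivity `⊓(X,Y) = r(X) + r(Y) − r(X ∪ Y)`. -/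
noncomputable def lconn (M : Matroid α) (X Y : Set α) : ℤ :=
  rk M X + rk M Y - rk M (X ∪ Y)

/-- The connectivity function `λ(X) = r(X) + r(E − X) − r(M)`. -/
noncomputable def lam (M : Matroid α) (X : Set α) : ℤ :=
  rk M X + rk M (M.E \ X) - rk M M.E

/-- A circuit: a minimal dependent set. -/
def IsCircuitP (M : Matroid α) (C : Set α) : Prop :=
  M.Dep C ∧ ∀ D ⊂ C, M.Indep D

/-- A triangle: a 3-element circuit. -/
def IsTriangleP (M : Matroid α) (T : Set α) : Prop :=
  IsCircuitP M T ∧ T.ncard = 3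

/-- A triad: a 3-element cocircuit. -/
def IsTriadP (M : Matroid α) (T : Set α) : Prop :=
  IsCircuitP M✶ T ∧ T.ncard = 3

/-- A `k`-separation: a partition `(X, E − X)` with `λ(X) < k` and both sides of
size at least `k`. -/
def IsKSepP (M : Matroid α) (k : ℕ) (X : Set α) : Prop :=
  X ⊆ M.E ∧ lam M X ≤ (k : ℤ) - 1 ∧ (k : ℤ) ≤ X.ncard ∧ (k : ℤ) ≤ (M.E \ X).ncard

/-- `M` is 3-connected if it has no `k`-separations for `k < 3`. -/
def ThreeConnectedP (M : Matroid α) : Prop :=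
  ∀ k : ℕ, k < 3 → ∀ X : Set α, ¬ IsKSepP M k X

/-- Deletion of a set of elements. -/
def PDelete (M : Matroid α) (D : Set α) : Matroid α := M ↾ (M.E \ D)

/-- Contraction of a set of elements. -/
def PContract (M : Matroid α) (C : Set α) : Matroid α := (PDelete M✶ C)✶

/-- `N` is a minor of `M`. -/
def IsMinorP (N M : Matroid α) : Prop :=
  ∃ C D, Disjoint C D ∧ C ⊆ M.E ∧ D ⊆ M.E ∧ N = PDelete (PContract M C) D

/-- `M` is (isomorphic to) the uniform matroid `U_{a,b}`. -/
def IsUnifP (a b : ℕ) (M : Matroid α) : Prop :=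
  M.E.Finite ∧ M.E.ncard = b ∧ ∀ I ⊆ M.E, (M.Indep I ↔ I.ncard ≤ a)

/-- `M` has a minor isomorphic to `U_{a,b}`. -/
def HasUnifMinorP (M : Matroid α) (a b : ℕ) : Prop :=
  ∃ N, IsMinorP N M ∧ IsUnifP a b N

/-- `M` has a minor isomorphic to `U_{2,5}` or `U_{3,5}`. -/
def HasU25U35MinorP (M : Matroid α) : Prop :=
  HasUnifMinorP M 2 5 ∨ HasUnifMinorP M 3 5

/-- `M` is fragile with respect to the (isomorphism-closed) property `P` of matroids:
`M` has a minor satisfying `P`, and no element is flexible. -/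
def FragileFor (M : Matroid α) (P : Matroid α → Prop) : Prop :=
  (∃ N, IsMinorP N M ∧ P N) ∧
    ∀ e ∈ M.E,
      ¬((∃ N, IsMinorP N (PDelete M {e}) ∧ P N) ∧ (∃ N, IsMinorP N (PContract M {e}) ∧ P N))


variable {M : Matroid α} {X Y I J C D : Set α}

lemma indep_finite [M.Finite] (hI : M.Indep I) : I.Finite :=
  M.set_finite I hI.subset_ground

lemma rk_set_mem_zero (M : Matroid α) (X : Set α) :
    (0 : ℕ) ∈ {n : ℕ | ∃ I, I ⊆ X ∧ M.Indep I ∧ I.ncard = n} :=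
  ⟨∅, empty_subset _, M.empty_indep, ncard_empty _⟩

lemma rk_set_bddAbove (M : Matroid α) [M.Finite] (X : Set α) :
    BddAbove {n : ℕ | ∃ I, I ⊆ X ∧ M.Indep I ∧ I.ncard = n} :=
  ⟨M.E.ncard, fun n ⟨I, _, hI, hc⟩ =>
    hc ▸ ncard_le_ncard hI.subset_ground M.ground_finite⟩

lemma le_rk [M.Finite] (hIX : I ⊆ X) (hI : M.Indep I) : (I.ncard : ℤ) ≤ rk M X := by
  exact_mod_cast Nat.cast_le.2 (le_csSup (rk_set_bddAbove M X) ⟨I, hIX, hI, rfl⟩)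

lemma rk_le [M.Finite] {n : ℕ} (h : ∀ I, I ⊆ X → M.Indep I → I.ncard ≤ n) :
    rk M X ≤ (n : ℤ) := by
  exact_mod_cast Nat.cast_le.2 (csSup_le ⟨0, rk_set_mem_zero M X⟩
    (fun m ⟨I, hIX, hI, hc⟩ => hc ▸ h I hIX hI))

lemma ncard_le_of_basis' [M.Finite] (hJ : M.Indep J) (hJX : J ⊆ X)
    (hI : M.IsBasis' I X) : J.ncard ≤ I.ncard := by
  obtain ⟨K, hK, hJK⟩ := hJ.subset_isBasis'_of_subset hJX
  have h1 : K.ncard = I.ncard := by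
    rw [Set.ncard_def, hK.encard_eq_encard hI, ← Set.ncard_def]
  exact h1 ▸ ncard_le_ncard hJK (indep_finite hK.indep)

lemma rk_basis' [M.Finite] (hI : M.IsBasis' I X) : rk M X = (I.ncard : ℤ) := by
  refine le_antisymm (rk_le fun J hJX hJ => ncard_le_of_basis' hJ hJX hI)
    (le_rk hI.subset hI.indep)

lemma rk_mono [M.Finite] (h : X ⊆ Y) : rk M X ≤ rk M Y := by
  obtain ⟨I, hI⟩ := M.exists_isBasis' X
  rw [rk_basis' hI]
  exact le_rk (hI.subset.trans h) hI.indep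

lemma rk_nonneg (M : Matroid α) (X : Set α) : 0 ≤ rk M X := Int.ofNat_nonneg _

lemma rk_empty (M : Matroid α) [M.Finite] : rk M ∅ = 0 := by
  refine le_antisymm ?_ (rk_nonneg M ∅)
  have := rk_le (M := M) (X := ∅) (n := 0)
    (fun I hI _ => by rw [subset_empty_iff.1 hI, ncard_empty])
  simpa using this

lemma rk_submod (M : Matroid α) [M.Finite] (X Y : Set α) :
    rk M (X ∪ Y) + rk M (X ∩ Y) ≤ rk M X + rk M Y := by
  obtain ⟨I, hI⟩ := M.exists_isBasis' (X ∩ Y)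
  obtain ⟨J, hJ, hIJ⟩ := hI.indep.subset_isBasis'_of_subset
    (hI.subset.trans (inter_subset_left.trans subset_union_left))
  have hJfin : J.Finite := indep_finite hJ.indep
  rw [rk_basis' hI, rk_basis' hJ]
  have hX : ((J ∩ X).ncard : ℤ) ≤ rk M X :=
    le_rk inter_subset_right (hJ.indep.subset inter_subset_left)
  have hY : ((J ∩ Y).ncard : ℤ) ≤ rk M Y :=
    le_rk inter_subset_right (hJ.indep.subset inter_subset_left)
  have hu : (J ∩ X) ∪ (J ∩ Y) = J := by
    rw [← inter_union_distrib_left, inter_eq_self_of_subset_left hJ.subset]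
  have hkey : (J ∩ X).ncard + (J ∩ Y).ncard = J.ncard + ((J ∩ X) ∩ (J ∩ Y)).ncard := by
    rw [← ncard_union_add_ncard_inter (J ∩ X) (J ∩ Y) (hJfin.inter_of_left _)
      (hJfin.inter_of_left _), hu]
  have hIsub : I ⊆ (J ∩ X) ∩ (J ∩ Y) := by
    refine subset_inter (subset_inter hIJ (hI.subset.trans inter_subset_left))
      (subset_inter hIJ (hI.subset.trans inter_subset_right))
  have hIle : I.ncard ≤ ((J ∩ X) ∩ (J ∩ Y)).ncard :=
    ncard_le_ncard hIsub ((hJfin.inter_of_left _).inter_of_left _)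
  have := hkey
  push_cast at this ⊢
  have hIle' : (I.ncard : ℤ) ≤ (((J ∩ X) ∩ (J ∩ Y)).ncard : ℤ) := by exact_mod_cast hIle
  linarith


lemma lconn_comm (M : Matroid α) (X Y : Set α) : lconn M X Y = lconn M Y X := by
  simp [lconn, union_comm, add_comm]

lemma lconn_mono_left [M.Finite] (h : X' ⊆ X) (Y : Set α) :
    lconn M X' Y ≤ lconn M X Y := by
  have hsub := rk_submod M X (X' ∪ Y)
  have h1 : X ∪ (X' ∪ Y) = X ∪ Y := by
    rw [← union_assoc, union_eq_self_of_subset_right h]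
  have h2 : rk M X' ≤ rk M (X ∩ (X' ∪ Y)) :=
    rk_mono (subset_inter h subset_union_left)
  rw [h1] at hsub
  simp only [lconn]
  linarith

lemma lconn_mono [M.Finite] (hX : X' ⊆ X) (hY : Y' ⊆ Y) :
    lconn M X' Y' ≤ lconn M X Y := by
  calc lconn M X' Y' ≤ lconn M X Y' := lconn_mono_left hX Y'
    _ = lconn M Y' X := lconn_comm M X Y'
    _ ≤ lconn M Y X := lconn_mono_left hY X
    _ = lconn M X Y := lconn_comm M Y X

lemma rk_restrict (M : Matroid α) (R A : Set α) : rk (M ↾ R) A = rk M (A ∩ R) := by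
  have : {n : ℕ | ∃ I, I ⊆ A ∧ (M ↾ R).Indep I ∧ I.ncard = n}
      = {n : ℕ | ∃ I, I ⊆ A ∩ R ∧ M.Indep I ∧ I.ncard = n} := by
    ext n
    constructor
    · rintro ⟨I, hIA, hInd, rfl⟩
      rw [restrict_indep_iff] at hInd
      exact ⟨I, subset_inter hIA hInd.2, hInd.1, rfl⟩
    · rintro ⟨I, hIA, hInd, rfl⟩
      exact ⟨I, hIA.trans inter_subset_left,
        restrict_indep_iff.2 ⟨hInd, hIA.trans inter_subset_right⟩, rfl⟩
  rw [rk, this, rk]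

lemma rk_dual (M : Matroid α) [M.Finite] (hX : X ⊆ M.E) :
    rk M✶ X = (X.ncard : ℤ) + rk M (M.E \ X) - rk M M.E := by
  obtain ⟨I, hI⟩ := M.exists_isBasis' (M.E \ X)
  obtain ⟨B, hB, hIB⟩ := hI.indep.exists_isBase_superset
  have hEfin := M.ground_finite
  have hXfin : X.Finite := hEfin.subset hX
  have hBfin : B.Finite := M.set_finite B hB.subset_ground
  have hBXI : B \ X = I := by
    refine (hI.eq_of_subset_indep (hB.indep.subset diff_subset)
      (subset_diff.2 ⟨hIB, disjoint_sdiff_left.mono_left hI.subset⟩)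
      (diff_subset_diff_left hB.subset_ground)).symm
  have hrkE : rk M M.E = (B.ncard : ℤ) := rk_basis' hB.isBasis_ground.isBasis'
  have hrkD : rk M (M.E \ X) = (I.ncard : ℤ) := rk_basis' hI
  -- cardinality bookkeeping in ℕ
  have e5 : (X ∩ B).ncard + (X \ B).ncard = X.ncard :=
    ncard_inter_add_ncard_diff_eq_ncard X B hXfin
  have e6 : (B ∩ X).ncard + I.ncard = B.ncard := by
    rw [← hBXI]; exact ncard_inter_add_ncard_diff_eq_ncard B X hBfin
  have hXBcomm : (X ∩ B).ncard = (B ∩ X).ncard := by rw [inter_comm]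
  have hge : ((X \ B).ncard : ℤ) ≤ rk M✶ X :=
    le_rk diff_subset (dual_indep_iff_exists'.2
      ⟨diff_subset.trans hX, B, hB, disjoint_sdiff_left⟩)
  have hle : rk M✶ X ≤ ((X \ B).ncard : ℤ) := by
    refine rk_le fun J hJX hJ => ?_
    obtain ⟨hJE, B', hB', hdis⟩ := dual_indep_iff_exists'.1 hJ
    have hB'fin : B'.Finite := M.set_finite B' hB'.subset_ground
    have hJfin : J.Finite := hXfin.subset hJX
    have e2 : (B' ∩ X).ncard + (B' \ X).ncard = B'.ncard :=
      ncard_inter_add_ncard_diff_eq_ncard B' X hB'fin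
    have e3 : (B' \ X).ncard ≤ I.ncard :=
      ncard_le_of_basis' (hB'.indep.subset diff_subset)
        (diff_subset_diff_left hB'.subset_ground) hI
    have e4 : B'.ncard = B.ncard := hB'.ncard_eq_ncard_of_isBase hB
    have e1 : J.ncard + (B' ∩ X).ncard ≤ X.ncard := by
      rw [← ncard_union_eq (hdis.mono_right inter_subset_left) hJfin
        (hB'fin.inter_of_left _)]
      exact ncard_le_ncard (union_subset hJX inter_subset_right) hXfin
    omega
  have : rk M✶ X = ((X \ B).ncard : ℤ) := le_antisymm hle hge
  rw [this, hrkE, hrkD]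
  have : ((X ∩ B).ncard : ℤ) + (X \ B).ncard = X.ncard := by exact_mod_cast e5
  have : ((B ∩ X).ncard : ℤ) + I.ncard = B.ncard := by exact_mod_cast e6
  have : ((X ∩ B).ncard : ℤ) = ((B ∩ X).ncard : ℤ) := by exact_mod_cast hXBcomm
  linarith


instance pdelete_finite [M.Finite] : (PDelete M D).Finite :=
  ⟨M.ground_finite.subset diff_subset⟩

instance pcontract_finite [M.Finite] : (PContract M C).Finite :=
  Matroid.dual_finite

@[simp] lemma pdelete_ground (M : Matroid α) (D : Set α) :
    (PDelete M D).E = M.E \ D := rfl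

@[simp] lemma pcontract_ground (M : Matroid α) (C : Set α) :
    (PContract M C).E = M.E \ C := rfl

lemma lam_dual (M : Matroid α) [M.Finite] (hX : X ⊆ M.E) : lam M✶ X = lam M X := by
  have hEfin := M.ground_finite
  have h1 : rk M✶ X = (X.ncard : ℤ) + rk M (M.E \ X) - rk M M.E := rk_dual M hX
  have h2 : rk M✶ (M.E \ X) = ((M.E \ X).ncard : ℤ) + rk M X - rk M M.E := by
    rw [rk_dual M diff_subset, diff_diff_cancel_left hX]
  have h3 : rk M✶ M.E = (M.E.ncard : ℤ) + 0 - rk M M.E := by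
    rw [rk_dual M Subset.rfl, diff_self, rk_empty]
  have hc : ((M.E \ X).ncard : ℤ) + X.ncard = M.E.ncard := by
    exact_mod_cast ncard_diff_add_ncard_of_subset hX hEfin
  simp only [lam, dual_ground, h1, h2, h3]
  linarith

lemma lam_delete (M : Matroid α) [M.Finite] (hX : X ⊆ M.E) (D : Set α) :
    lam (PDelete M D) (X \ D) ≤ lam M X := by
  have hg : (PDelete M D).E = M.E \ D := rfl
  have hXD : (X \ D) ∩ (M.E \ D) = X \ D :=
    inter_eq_self_of_subset_left (diff_subset_diff_left hX)
  have hY : ((M.E \ D) \ (X \ D)) ∩ (M.E \ D) = (M.E \ X) \ D := by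
    ext x; constructor
    · rintro ⟨⟨⟨hxE, hxD⟩, hx⟩, -⟩
      exact ⟨⟨hxE, fun hxX => hx ⟨hxX, hxD⟩⟩, hxD⟩
    · rintro ⟨⟨hxE, hxX⟩, hxD⟩
      exact ⟨⟨⟨hxE, hxD⟩, fun h => hxX h.1⟩, ⟨hxE, hxD⟩⟩
  have hE : (M.E \ D) ∩ (M.E \ D) = M.E \ D := inter_self _
  have hunion : (X \ D) ∪ ((M.E \ X) \ D) = M.E \ D := by
    rw [← union_diff_distrib, union_diff_cancel hX]
  have lhs_eq : lam (PDelete M D) (X \ D) = lconn M (X \ D) ((M.E \ X) \ D) := by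
    simp only [lam, lconn, PDelete, rk_restrict, restrict_ground_eq, hXD, hY, hE, hunion]
  have rhs_eq : lam M X = lconn M X (M.E \ X) := by
    simp only [lam, lconn, union_diff_cancel hX]
  rw [lhs_eq, rhs_eq]
  exact lconn_mono diff_subset diff_subset

lemma lam_contract (M : Matroid α) [M.Finite] (hX : X ⊆ M.E) (C : Set α) :
    lam (PContract M C) (X \ C) ≤ lam M X := by
  haveI : (PDelete M✶ C).Finite := pdelete_finite
  have h1 : lam (PContract M C) (X \ C) = lam (PDelete M✶ C) (X \ C) := by
    exact lam_dual (PDelete M✶ C)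
      (by rw [pdelete_ground, dual_ground]; exact diff_subset_diff_left hX)
  have h2 : lam (PDelete M✶ C) (X \ C) ≤ lam M✶ X :=
    lam_delete M✶ (by rwa [dual_ground]) C
  have h3 : lam M✶ X = lam M X := lam_dual M hX
  linarith


/-- If `(X,Y)` is a 2-separation of `M` and `N` is a 3-connected minor
of `M`, then one of `X ∩ E(N)` and `Y ∩ E(N)` has at most one element. -/
theorem stmt6 (M N : Matroid α) [M.Finite]
    (X Y : Set α) (hdisj : Disjoint X Y) (hU : X ∪ Y = M.E)
    (hsep : IsKSepP M 2 X)
    (hminor : IsMinorP N M) (hN : ThreeConnectedP N) :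
    (X ∩ N.E).ncard ≤ 1 ∨ (Y ∩ N.E).ncard ≤ 1 := by
  obtain ⟨C, D, hCD, hCE, hDE, rfl⟩ := hminor
  set N := PDelete (PContract M C) D with hNdef
  have hXE : X ⊆ M.E := hsep.1
  have hNE : N.E = (M.E \ C) \ D := rfl
  have hNEM : N.E ⊆ M.E := (diff_subset.trans diff_subset)
  have hX' : X ∩ N.E = (X \ C) \ D := by
    ext x
    simp only [hNE, mem_inter_iff, mem_diff]
    constructor
    · rintro ⟨hx, ⟨-, hC⟩, hD⟩; exact ⟨⟨hx, hC⟩, hD⟩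
    · rintro ⟨⟨hx, hC⟩, hD⟩; exact ⟨hx, ⟨hXE hx, hC⟩, hD⟩
  haveI : (PContract M C).Finite := pcontract_finite
  have hlam : lam N (X ∩ N.E) ≤ 1 := by
    rw [hX']
    have h1 : lam N ((X \ C) \ D) ≤ lam (PContract M C) (X \ C) :=
      lam_delete (PContract M C) (by rw [pcontract_ground]; exact diff_subset_diff_left hXE) D
    have h2 : lam (PContract M C) (X \ C) ≤ lam M X := lam_contract M hXE C
    have h3 : lam M X ≤ 1 := by
      have := hsep.2.1; norm_num at this; exact this
    linarith
  have hcompl : N.E \ (X ∩ N.E) = Y ∩ N.E := by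
    ext x
    simp only [mem_diff, mem_inter_iff, not_and]
    constructor
    · rintro ⟨hxN, hx⟩
      have hxE : x ∈ M.E := hNEM hxN
      rw [← hU] at hxE
      rcases hxE with hX | hY
      · exact (hx hX hxN).elim
      · exact ⟨hY, hxN⟩
    · rintro ⟨hxY, hxN⟩
      exact ⟨hxN, fun hxX _ => (disjoint_left.1 hdisj hxX hxY)⟩
  by_contra hcon
  push_neg at hcon
  obtain ⟨h1, h2⟩ := hcon
  refine hN 2 (by norm_num) (X ∩ N.E) ⟨inter_subset_right, by norm_num; exact hlam, ?_, ?_⟩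
  · exact_mod_cast h1
  · rw [hcompl]; exact_mod_cast h2
end PaperFormal
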